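/- Let G be a finite simple graph, let A ⊆ V be a critical set (i.e., d(A) = d_c(G)), and let S₀ be an inclusion-minimal independent set with d(S₀) > 0. Then S₀ ⊆ A. In particular, every inclusion-minimal independent set with positive difference is contained in ker(G). -/

import Mathlib

/-!
The difference `d` is supermodular, so for a critical `A` and any `S`,
`d(A ∩ S) ≥ d(S) + d(A) - d(A ∪ S) ≥ d(S)`. If `S` is a minimal independent set with `d(S) > 0`,
then `A ∩ S` is an independent subset of `S` with positive difference, hence equals `S`.
For the kernel: a critical independent set is itself critical, because `A \ N(A)` is an
independent set with `d(A \ N(A)) ≥ d(A)`.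
-/

open Finset

namespace CritGraph

variable {V : Type*} [Fintype V] [DecidableEq V]

/-- The neighborhood of a set of vertices `X`:
all vertices having at least one neighbor in `X`. -/
def nbhd (G : SimpleGraph V) [DecidableRel G.Adj] (X : Finset V) : Finset V :=
  univ.filter fun v => ∃ x ∈ X, G.Adj v x

/-- The difference `d(X) = |X| - |N(X)|` of a set of vertices `X`. -/
def diff (G : SimpleGraph V) [DecidableRel G.Adj] (X : Finset V) : ℤ :=
  (X.card : ℤ) - ((nbhd G X).card : ℤ)

/-- A set of vertices is independent if no two of its vertices are adjacent. -/
def IsIndep (G : SimpleGraph V) (S : Finset V) : Prop :=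
  ∀ u ∈ S, ∀ v ∈ S, ¬ G.Adj u v

instance (G : SimpleGraph V) [DecidableRel G.Adj] : DecidablePred (IsIndep G) := fun S =>
  inferInstanceAs (Decidable (∀ u ∈ S, ∀ v ∈ S, ¬ G.Adj u v))

/-- The critical difference `d_c(G) = max {d(X) : X ⊆ V}`. -/
def dC (G : SimpleGraph V) [DecidableRel G.Adj] : ℤ :=
  (univ : Finset V).powerset.sup' (Finset.powerset_nonempty _) (diff G)

/-- The critical independence difference `id_c(G) = max {d(I) : I independent}`. -/
def idC (G : SimpleGraph V) [DecidableRel G.Adj] : ℤ :=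
  ((univ : Finset V).powerset.filter (IsIndep G)).sup'
    ⟨∅, by simp [IsIndep]⟩ (diff G)

/-- `A` is a critical independent set: `A` is independent and
`d(A) = max {d(I) : I independent}`. -/
def IsCritIndep (G : SimpleGraph V) [DecidableRel G.Adj] (A : Finset V) : Prop :=
  IsIndep G A ∧ ∀ I : Finset V, IsIndep G I → diff G I ≤ diff G A

instance (G : SimpleGraph V) [DecidableRel G.Adj] : DecidablePred (IsCritIndep G) := fun A =>
  inferInstanceAs (Decidable (IsIndep G A ∧ ∀ I : Finset V, IsIndep G I → diff G I ≤ diff G A))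

/-- `ker(G)`: the intersection of all critical independent sets of `G`. -/
def kerG (G : SimpleGraph V) [DecidableRel G.Adj] : Finset V :=
  univ.filter fun v => ∀ A : Finset V, IsCritIndep G A → v ∈ A

/-- `G - v`: the induced subgraph of `G` on `V \ {v}`. -/
def deleteVert (G : SimpleGraph V) (v : V) : SimpleGraph {u : V // u ≠ v} :=
  G.comap Subtype.val

instance (G : SimpleGraph V) (v : V) [DecidableRel G.Adj] :
    DecidableRel (deleteVert G v).Adj := fun a b =>
  inferInstanceAs (Decidable (G.Adj a.val b.val))

/-- `S` is an inclusion-minimal independent set with positive difference. -/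
def MinPosIndep (G : SimpleGraph V) [DecidableRel G.Adj] (S : Finset V) : Prop :=
  IsIndep G S ∧ 0 < diff G S ∧ ∀ S' ⊂ S, ¬ (IsIndep G S' ∧ 0 < diff G S')

/-- `S` is a maximum independent set. -/
def IsMaxIndep (G : SimpleGraph V) (S : Finset V) : Prop :=
  IsIndep G S ∧ ∀ I : Finset V, IsIndep G I → I.card ≤ S.card

instance (G : SimpleGraph V) [DecidableRel G.Adj] : DecidablePred (IsMaxIndep G) := fun S =>
  inferInstanceAs (Decidable (IsIndep G S ∧ ∀ I : Finset V, IsIndep G I → I.card ≤ S.card))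

/-- `core(G)`: the intersection of all maximum independent sets of `G`. -/
def coreG (G : SimpleGraph V) [DecidableRel G.Adj] : Finset V :=
  univ.filter fun v => ∀ A : Finset V, IsMaxIndep G A → v ∈ A

/-- `A` is critical, `d(A) = d_c(G)`. -/
def IsCritical (G : SimpleGraph V) [DecidableRel G.Adj] (A : Finset V) : Prop :=
  ∀ X : Finset V, diff G X ≤ diff G A

section

variable (G : SimpleGraph V) [DecidableRel G.Adj]

omit [DecidableEq V] in
lemma mem_nbhd {X : Finset V} {v : V} : v ∈ nbhd G X ↔ ∃ x ∈ X, G.Adj v x := by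
  simp [nbhd]

omit [DecidableEq V] in
lemma nbhd_mono {X Y : Finset V} (h : X ⊆ Y) : nbhd G X ⊆ nbhd G Y := fun v hv => by
  obtain ⟨x, hx, hvx⟩ := (mem_nbhd G).1 hv
  exact (mem_nbhd G).2 ⟨x, h hx, hvx⟩

lemma nbhd_union (X Y : Finset V) : nbhd G (X ∪ Y) = nbhd G X ∪ nbhd G Y := by
  ext v
  simp only [mem_union, mem_nbhd, or_and_right, exists_or]

lemma diff_add_diff_le_diff_union_add_diff_inter (X Y : Finset V) :
    diff G X + diff G Y ≤ diff G (X ∪ Y) + diff G (X ∩ Y) := by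
  have hX : (X ∪ Y).card + (X ∩ Y).card = X.card + Y.card := card_union_add_card_inter X Y
  have hN : (nbhd G (X ∪ Y)).card + (nbhd G (X ∩ Y)).card ≤
      (nbhd G X).card + (nbhd G Y).card := by
    rw [nbhd_union, ← card_union_add_card_inter (nbhd G X)]
    gcongr
    exact subset_inter (nbhd_mono G inter_subset_left) (nbhd_mono G inter_subset_right)
  simp only [diff]
  omega

omit [Fintype V] [DecidableEq V] [DecidableRel G.Adj] in
lemma IsIndep.mono {S T : Finset V} (hT : IsIndep G T) (h : S ⊆ T) : IsIndep G S :=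
  fun u hu v hv => hT u (h hu) v (h hv)

lemma isIndep_sdiff_nbhd (A : Finset V) : IsIndep G (A \ nbhd G A) := by
  intro u hu v hv huv
  exact (mem_sdiff.1 hu).2 ((mem_nbhd G).2 ⟨v, (mem_sdiff.1 hv).1, huv⟩)

/-- Removing `N(A)` from `A` loses `|A ∩ N(A)|` vertices but, since no vertex of `A` is adjacent
to `A \ N(A)`, also removes `A ∩ N(A)` from the neighbourhood. -/
lemma diff_le_diff_sdiff_nbhd (A : Finset V) : diff G A ≤ diff G (A \ nbhd G A) := by
  have hN : nbhd G (A \ nbhd G A) ⊆ nbhd G A \ A := fun v hv => by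
    obtain ⟨x, hx, hvx⟩ := (mem_nbhd G).1 hv
    refine mem_sdiff.2 ⟨nbhd_mono G sdiff_subset hv, fun hvA => ?_⟩
    exact (mem_sdiff.1 hx).2 ((mem_nbhd G).2 ⟨v, hvA, hvx.symm⟩)
  have hA := card_sdiff_add_card_inter A (nbhd G A)
  have hNA := card_sdiff_add_card_inter (nbhd G A) A
  have hle := card_le_card hN
  rw [inter_comm] at hNA
  simp only [diff]
  omega

omit [DecidableEq V] in
lemma isCritical_of_diff_eq_dC {A : Finset V} (hA : diff G A = dC G) : IsCritical G A :=
  fun X => hA ▸ le_sup' (diff G) (mem_powerset.2 (subset_univ X))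

omit [DecidableEq V] in
lemma exists_isCritical : ∃ A : Finset V, IsCritical G A := by
  obtain ⟨A, -, hA⟩ := exists_mem_eq_sup' (powerset_nonempty univ) (diff G)
  exact ⟨A, isCritical_of_diff_eq_dC G hA.symm⟩

variable {G}

lemma IsCritIndep.isCritical {B : Finset V} (hB : IsCritIndep G B) : IsCritical G B := by
  obtain ⟨A, hA⟩ := exists_isCritical G
  exact fun X => (hA X).trans <| (diff_le_diff_sdiff_nbhd G A).trans <|
    hB.2 _ (isIndep_sdiff_nbhd G A)

lemma MinPosIndep.subset_of_isCritical {A S : Finset V} (hS : MinPosIndep G S)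
    (hA : IsCritical G A) : S ⊆ A := by
  obtain ⟨hSindep, hSpos, hSmin⟩ := hS
  have hpos : 0 < diff G (A ∩ S) := by
    linarith [diff_add_diff_le_diff_union_add_diff_inter G A S, hA (A ∪ S)]
  by_contra hSA
  exact hSmin _ ⟨inter_subset_right, fun h => hSA (h.trans inter_subset_left)⟩
    ⟨hSindep.mono G inter_subset_right, hpos⟩

end

/-- Every inclusion-minimal independent set with positive difference is contained in
every critical set; in particular, it is contained in `ker(G)`. -/
theorem minPosIndep_subset_critical (G : SimpleGraph V) [DecidableRel G.Adj]
    (A S₀ : Finset V) (hA : diff G A = dC G) (hS : MinPosIndep G S₀) :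
    S₀ ⊆ A ∧ S₀ ⊆ kerG G := by
  refine ⟨hS.subset_of_isCritical (isCritical_of_diff_eq_dC G hA), fun v hv => ?_⟩
  simp only [kerG, mem_filter, mem_univ, true_and]
  exact fun B hB => hS.subset_of_isCritical hB.isCritical hv

end CritGraph
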